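/- arXiv:2203.02950 — 2 statements merged into one kernel-verified Lean document; each statement's English description precedes it below -/
import Mathlib

section
/- For every M₁ > 0 there exist ξ₀ > 0 and a constant M > 0 such that for all 0 < ξ < ξ₀, all μ ∈ (0,1), all integers n ≥ 1, all θ₀ ∈ ℝ and all continuous functions 𝐔⊕, 𝐔⊖ : [0,2π] → ℝ⁴ with ‖𝐔⊕‖ ≤ 2M₁μξ⁶ and ‖𝐔⊖‖ ≤ 2M₁μξ⁶, the map 𝒢₀ defined by 𝒢₀(𝐔)(T) = F₀(𝐔₀ᵉ(T)+𝐔(T)) − F₀(𝐔₀ᵉ(T)) − DF₀(𝐔₀ᵉ(T))𝐔(T) satisfies ‖𝒢₀(𝐔⊕) − 𝒢₀(𝐔⊖)‖ ≤ (M·μ/n)·ξ⁹·‖𝐔⊕ − 𝐔⊖‖. -/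
open Real Set

noncomputable section

/-- Points of the phase space `ℝ⁴`, with coordinates `(𝒰, 𝒱, 𝒰', 𝒱')`. -/
abbrev V4 := Fin 4 → ℝ

/-- The unperturbed (two-body) vector field `F₀`. -/
def F0 (n : ℕ) (ξ : ℝ) (v : V4) : V4 :=
  ![v 2, v 3,
    -(n:ℝ)^2 * v 0 + 8*((v 0)^2+(v 1)^2)*(v 3)*ξ^3 + 12*((v 0)^2+(v 1)^2)^2*(v 0)*ξ^6,
    -(n:ℝ)^2 * v 1 - 8*((v 0)^2+(v 1)^2)*(v 2)*ξ^3 + 12*((v 0)^2+(v 1)^2)^2*(v 1)*ξ^6]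

/-- The function `r₂` appearing in the perturbation `F₁`. -/
def r2 (μ : ℝ) (n : ℕ) (ξ U V : ℝ) : ℝ :=
  Real.sqrt (1 + 4*(1-μ)^((1:ℝ)/3)*(U^2-V^2)*ξ^2/(n:ℝ)^((2:ℝ)/3)
    + 4*(1-μ)^((2:ℝ)/3)*(U^2+V^2)^2*ξ^4/(n:ℝ)^((4:ℝ)/3))

/-- The perturbing vector field `F₁`. -/
def F1 (μ : ℝ) (n : ℕ) (ξ : ℝ) (v : V4) : V4 :=
  ![0, 0,
    2*((n:ℝ)^((4:ℝ)/3)/(1-μ)^((2:ℝ)/3)*(1/r2 μ n ξ (v 0) (v 1) - 1)*ξ^2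
       - 4*((v 0)^2+(v 1)^2)^2*ξ^6/(r2 μ n ξ (v 0) (v 1))^3
       - 2*(n:ℝ)^((2:ℝ)/3)*((v 0)^2+(v 1)^2)*ξ^4/((1-μ)^((1:ℝ)/3)*(r2 μ n ξ (v 0) (v 1))^3)
       + 4*(n:ℝ)^((2:ℝ)/3)*(v 0)^2*ξ^4/(1-μ)^((1:ℝ)/3)) * (v 0),
    2*((n:ℝ)^((4:ℝ)/3)/(1-μ)^((2:ℝ)/3)*(1/r2 μ n ξ (v 0) (v 1) - 1)*ξ^2
       - 4*((v 0)^2+(v 1)^2)^2*ξ^6/(r2 μ n ξ (v 0) (v 1))^3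
       + 2*(n:ℝ)^((2:ℝ)/3)*((v 0)^2+(v 1)^2)*ξ^4/((1-μ)^((1:ℝ)/3)*(r2 μ n ξ (v 0) (v 1))^3)
       - 4*(n:ℝ)^((2:ℝ)/3)*(v 1)^2*ξ^4/(1-μ)^((1:ℝ)/3)) * (v 1)]

/-- The sidereal time `t(T) = 2[T − cos(nT)sin(nT)/n]ξ³`. -/
def tOf (n : ℕ) (ξ : ℝ) (T : ℝ) : ℝ :=
  2*(T - Real.cos ((n:ℝ)*T)*Real.sin ((n:ℝ)*T)/(n:ℝ))*ξ^3

/-- First component of the unperturbed ejection solution. -/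
def U0s (n : ℕ) (ξ θ₀ : ℝ) (T : ℝ) : ℝ :=
  Real.cos (θ₀ - tOf n ξ T/2) * Real.sin ((n:ℝ)*T)

/-- Second component of the unperturbed ejection solution. -/
def V0s (n : ℕ) (ξ θ₀ : ℝ) (T : ℝ) : ℝ :=
  Real.sin (θ₀ - tOf n ξ T/2) * Real.sin ((n:ℝ)*T)

/-- The unperturbed ejection solution `𝐔₀ᵉ(T)` of `𝐔' = F₀(𝐔)` with initial condition
`(0,0,n cos θ₀, n sin θ₀)`. -/
def U0e (n : ℕ) (ξ θ₀ : ℝ) (T : ℝ) : V4 :=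
  ![U0s n ξ θ₀ T, V0s n ξ θ₀ T, deriv (U0s n ξ θ₀) T, deriv (V0s n ξ θ₀) T]

/-- The Jacobian matrix `DF₀` of the vector field `F₀`. -/
def DF0 (n : ℕ) (ξ : ℝ) (v : V4) : Matrix (Fin 4) (Fin 4) ℝ :=
  Matrix.of fun i j => deriv (fun s : ℝ => F0 n ξ (Function.update v j s) i) (v j)

/-- The nonlinear part `𝒢(𝐔)(T)` of the equation for the perturbation `𝐔₁`. -/
def Gmap (μ : ℝ) (n : ℕ) (ξ θ₀ : ℝ) (U : ℝ → V4) (T : ℝ) : V4 :=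
  μ • F1 μ n ξ (U0e n ξ θ₀ T + U T) + F0 n ξ (U0e n ξ θ₀ T + U T)
    - F0 n ξ (U0e n ξ θ₀ T) - (DF0 n ξ (U0e n ξ θ₀ T)).mulVec (U T)

/-- The fixed-point operator `H{𝐔}(T) = X(T)·∫₀ᵀ X(s)⁻¹ 𝒢(𝐔)(s) ds`. -/
def Hop (μ : ℝ) (n : ℕ) (ξ θ₀ : ℝ) (X : ℝ → Matrix (Fin 4) (Fin 4) ℝ)
    (U : ℝ → V4) (T : ℝ) : V4 :=
  (X T).mulVec (∫ s in (0:ℝ)..T, ((X s)⁻¹).mulVec (Gmap μ n ξ θ₀ U s))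

/-- The weighted sup-norm `‖𝐔‖ = sup_{T∈[0,2π]} (n|𝒰| + n|𝒱| + |𝒰'| + |𝒱'|)`. -/
def wnorm (n : ℕ) (U : ℝ → V4) : ℝ :=
  sSup ((fun T => (n:ℝ)*|U T 0| + (n:ℝ)*|U T 1| + |U T 2| + |U T 3|) '' Set.Icc 0 (2*π))

/-- `X` is the fundamental matrix solution of the linearized system
`Y' = DF₀(𝐔₀ᵉ(T))Y` with `X(0) = Id`. -/
def IsFundMat (n : ℕ) (ξ θ₀ : ℝ) (X : ℝ → Matrix (Fin 4) (Fin 4) ℝ) : Prop :=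
  X 0 = 1 ∧ ∀ T ∈ Set.Icc (0:ℝ) (2*π), ∀ i j : Fin 4,
    HasDerivAt (fun s => X s i j) ((DF0 n ξ (U0e n ξ θ₀ T) * X T) i j) T

/-- `Ue` is the ejection solution of the full system `𝐔' = F₀(𝐔) + μF₁(𝐔)` with
initial condition `(0,0,n cos θ₀, n sin θ₀)`, defined on `[0,2π]`. -/
def IsFullEjection (μ : ℝ) (n : ℕ) (ξ θ₀ : ℝ) (Ue : ℝ → V4) : Prop :=
  Ue 0 = ![0, 0, (n:ℝ)*Real.cos θ₀, (n:ℝ)*Real.sin θ₀] ∧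
  ∀ T ∈ Set.Icc (0:ℝ) (2*π), ∀ i : Fin 4,
    HasDerivAt (fun s => Ue s i) ((F0 n ξ (Ue T) + μ • F1 μ n ξ (Ue T)) i) T

/-- The map `𝒢₀(𝐔)(T) = F₀(𝐔₀ᵉ(T)+𝐔(T)) − F₀(𝐔₀ᵉ(T)) − DF₀(𝐔₀ᵉ(T))𝐔(T)`. -/
def G0map (n : ℕ) (ξ θ₀ : ℝ) (U : ℝ → V4) (T : ℝ) : V4 :=
  F0 n ξ (U0e n ξ θ₀ T + U T) - F0 n ξ (U0e n ξ θ₀ T)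
    - (DF0 n ξ (U0e n ξ θ₀ T)).mulVec (U T)

/-!
In the position components `𝒢₀` vanishes; in the velocity components it is the second-order
Taylor remainder, at `𝐔₀ᵉ(T)`, of the nonlinear terms `8ξ³(𝒰² + 𝒱²)𝒱'` and
`12ξ⁶(𝒰² + 𝒱²)²𝒰` of `F₀`. Being at least quadratic in the increment, its difference at two
increments of weighted size `ε` is bounded by a multiple of `ξ³ · (ε/n) · ‖𝐔⊕ − 𝐔⊖‖`, because
`|𝒰₀ᵉ|, |𝒱₀ᵉ| ≤ 1` and `|𝒰₀ᵉ'|, |𝒱₀ᵉ'| ≤ 3n`, and the positions of the increments are of size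
`ε/n`. With `ε = 2M₁μξ⁶` this is the claimed `(μ/n)ξ⁹` Lipschitz constant; `ξ₀ ≤ 1/(2M₁)` keeps
`ε/n ≤ 1`, so that higher powers of the increment are dominated by the first.
-/

section AbsBounds

variable {α : Type*} [CommRing α] [LinearOrder α] [IsStrictOrderedRing α]

lemma abs_mul_le_of_abs_le {p q A B : α} (hp : |p| ≤ A) (hq : |q| ≤ B) : |p * q| ≤ A * B := by
  rw [abs_mul]
  exact mul_le_mul hp hq (abs_nonneg q) ((abs_nonneg p).trans hp)

lemma abs_mul_sub_mul_le {p q p' q' A B δ η : α} (hq : |q| ≤ B) (hp' : |p'| ≤ A)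
    (hp : |p - p'| ≤ δ) (hq' : |q - q'| ≤ η) : |p * q - p' * q'| ≤ δ * B + A * η :=
  calc |p * q - p' * q'| = |(p - p') * q + p' * (q - q')| := by ring_nf
    _ ≤ |(p - p') * q| + |p' * (q - q')| := abs_add_le _ _
    _ ≤ δ * B + A * η := add_le_add (abs_mul_le_of_abs_le hp hq) (abs_mul_le_of_abs_le hp' hq')

lemma abs_mul_add_mul_le {p q X Y : α} (hX : |X| ≤ 1) (hY : |Y| ≤ 1) :
    |p * X + q * Y| ≤ |p| + |q| :=
  (abs_add_le _ _).trans (add_le_add (by simpa using abs_mul_le_of_abs_le le_rfl hX)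
    (by simpa using abs_mul_le_of_abs_le le_rfl hY))

end AbsBounds

/- With `q(u, v) = u² + v²`, `normSqIncr a₀ a₁ x₀ x₁ = q(a + x) - q(a)`, and `cubicRem`,
`quinticRem` are the second-order Taylor remainders at `a` of `q(u, v)·w` and `q(u, v)²·u`,
the two nonlinear terms of `F₀`. -/
def normSqIncr (a₀ a₁ x₀ x₁ : ℝ) : ℝ := 2*a₀*x₀ + 2*a₁*x₁ + x₀^2 + x₁^2

def cubicRem (a₀ a₁ a₃ x₀ x₁ x₃ : ℝ) : ℝ :=
  normSqIncr a₀ a₁ x₀ x₁ * x₃ + (x₀^2 + x₁^2) * a₃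

def quinticRem (a₀ a₁ x₀ x₁ : ℝ) : ℝ :=
  2*(a₀^2 + a₁^2)*a₀*(x₀^2 + x₁^2) + normSqIncr a₀ a₁ x₀ x₁ ^ 2 * a₀
    + normSqIncr a₀ a₁ x₀ x₁ * (2*(a₀^2 + a₁^2) + normSqIncr a₀ a₁ x₀ x₁) * x₀

def nonlinRem (ξ a₀ a₁ a₃ x₀ x₁ x₃ : ℝ) : ℝ :=
  8*ξ^3 * cubicRem a₀ a₁ a₃ x₀ x₁ x₃ + 12*ξ^6 * quinticRem a₀ a₁ x₀ x₁

section RemainderBounds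

variable {n ξ a₀ a₁ a₃ x₀ x₁ x₃ y₀ y₁ y₃ e δ : ℝ}

lemma abs_sq_add_sq_sub_le (hx₀ : |x₀| ≤ e) (hx₁ : |x₁| ≤ e) (hy₀ : |y₀| ≤ e) (hy₁ : |y₁| ≤ e)
    (hδ₀ : |x₀ - y₀| ≤ δ) (hδ₁ : |x₁ - y₁| ≤ δ) :
    |(x₀^2 + x₁^2) - (y₀^2 + y₁^2)| ≤ 4*e*δ := by
  have h₀ := abs_mul_sub_mul_le hx₀ hy₀ hδ₀ hδ₀
  have h₁ := abs_mul_sub_mul_le hx₁ hy₁ hδ₁ hδ₁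
  calc |(x₀^2 + x₁^2) - (y₀^2 + y₁^2)| = |(x₀*x₀ - y₀*y₀) + (x₁*x₁ - y₁*y₁)| := by ring_nf
    _ ≤ |x₀*x₀ - y₀*y₀| + |x₁*x₁ - y₁*y₁| := abs_add_le _ _
    _ ≤ 4*e*δ := by linarith

lemma abs_normSqIncr_le (ha₀ : |a₀| ≤ 1) (ha₁ : |a₁| ≤ 1) (hx₀ : |x₀| ≤ e) (hx₁ : |x₁| ≤ e)
    (he : e ≤ 1) : |normSqIncr a₀ a₁ x₀ x₁| ≤ 6*e := by
  have h₀ := abs_le.mp (abs_mul_le_of_abs_le ha₀ hx₀)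
  have h₁ := abs_le.mp (abs_mul_le_of_abs_le ha₁ hx₁)
  have h₂ := abs_le.mp (abs_mul_le_of_abs_le hx₀ hx₀)
  have h₃ := abs_le.mp (abs_mul_le_of_abs_le hx₁ hx₁)
  have he₂ : e*e ≤ e := mul_le_of_le_one_left ((abs_nonneg _).trans hx₀) he
  unfold normSqIncr
  rw [abs_le]
  constructor <;> linarith

lemma abs_normSqIncr_sub_le (ha₀ : |a₀| ≤ 1) (ha₁ : |a₁| ≤ 1)
    (hx₀ : |x₀| ≤ e) (hx₁ : |x₁| ≤ e) (hy₀ : |y₀| ≤ e) (hy₁ : |y₁| ≤ e)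
    (hδ₀ : |x₀ - y₀| ≤ δ) (hδ₁ : |x₁ - y₁| ≤ δ) (he : e ≤ 1) :
    |normSqIncr a₀ a₁ x₀ x₁ - normSqIncr a₀ a₁ y₀ y₁| ≤ 8*δ := by
  have h₀ := abs_le.mp (abs_mul_le_of_abs_le ha₀ hδ₀)
  have h₁ := abs_le.mp (abs_mul_le_of_abs_le ha₁ hδ₁)
  have hq := abs_le.mp (abs_sq_add_sq_sub_le hx₀ hx₁ hy₀ hy₁ hδ₀ hδ₁)
  have heδ : e*δ ≤ δ := mul_le_of_le_one_left ((abs_nonneg _).trans hδ₀) he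
  unfold normSqIncr
  rw [abs_le]
  constructor <;> linarith

lemma abs_cubicRem_sub_le (ha₀ : |a₀| ≤ 1) (ha₁ : |a₁| ≤ 1) (ha₃ : |a₃| ≤ 3*n)
    (hx₀ : |x₀| ≤ e) (hx₁ : |x₁| ≤ e) (hx₃ : |x₃| ≤ n*e) (hy₀ : |y₀| ≤ e) (hy₁ : |y₁| ≤ e)
    (hδ₀ : |x₀ - y₀| ≤ δ) (hδ₁ : |x₁ - y₁| ≤ δ) (hδ₃ : |x₃ - y₃| ≤ n*δ) (he : e ≤ 1) :
    |cubicRem a₀ a₁ a₃ x₀ x₁ x₃ - cubicRem a₀ a₁ a₃ y₀ y₁ y₃| ≤ 26*n*e*δ := by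
  have hD := abs_mul_sub_mul_le hx₃ (abs_normSqIncr_le ha₀ ha₁ hy₀ hy₁ he)
    (abs_normSqIncr_sub_le ha₀ ha₁ hx₀ hx₁ hy₀ hy₁ hδ₀ hδ₁ he) hδ₃
  have hq := abs_mul_le_of_abs_le ha₃ (abs_sq_add_sq_sub_le hx₀ hx₁ hy₀ hy₁ hδ₀ hδ₁)
  calc |cubicRem a₀ a₁ a₃ x₀ x₁ x₃ - cubicRem a₀ a₁ a₃ y₀ y₁ y₃|
        = |(normSqIncr a₀ a₁ x₀ x₁ * x₃ - normSqIncr a₀ a₁ y₀ y₁ * y₃)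
            + a₃ * ((x₀^2 + x₁^2) - (y₀^2 + y₁^2))| := by unfold cubicRem; ring_nf
    _ ≤ _ := abs_add_le _ _
    _ ≤ 26*n*e*δ := by linarith

lemma abs_quinticRem_sub_le (ha₀ : |a₀| ≤ 1) (ha₁ : |a₁| ≤ 1)
    (hx₀ : |x₀| ≤ e) (hx₁ : |x₁| ≤ e) (hy₀ : |y₀| ≤ e) (hy₁ : |y₁| ≤ e)
    (hδ₀ : |x₀ - y₀| ≤ δ) (hδ₁ : |x₁ - y₁| ≤ δ) (he : e ≤ 1) :
    |quinticRem a₀ a₁ x₀ x₁ - quinticRem a₀ a₁ y₀ y₁| ≤ 300*e*δ := by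
  have hid : quinticRem a₀ a₁ x₀ x₁ - quinticRem a₀ a₁ y₀ y₁
      = 2*(a₀^2 + a₁^2)*a₀*((x₀^2 + x₁^2) - (y₀^2 + y₁^2))
        + (normSqIncr a₀ a₁ x₀ x₁ * normSqIncr a₀ a₁ x₀ x₁
            - normSqIncr a₀ a₁ y₀ y₁ * normSqIncr a₀ a₁ y₀ y₁) * a₀
        + (normSqIncr a₀ a₁ x₀ x₁ * ((2*(a₀^2 + a₁^2) + normSqIncr a₀ a₁ x₀ x₁) * x₀)
            - normSqIncr a₀ a₁ y₀ y₁ * ((2*(a₀^2 + a₁^2) + normSqIncr a₀ a₁ y₀ y₁) * y₀)) := by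
    unfold quinticRem; ring
  have he₀ : 0 ≤ e := (abs_nonneg _).trans hx₀
  have hδ : 0 ≤ δ := (abs_nonneg _).trans hδ₀
  have hs : |2*(a₀^2 + a₁^2)| ≤ 4 := by
    have := sq_abs a₀ ▸ pow_le_one₀ (abs_nonneg a₀) ha₀
    have := sq_abs a₁ ▸ pow_le_one₀ (abs_nonneg a₁) ha₁
    rw [abs_of_nonneg (by positivity)]
    linarith
  have hDx := abs_normSqIncr_le ha₀ ha₁ hx₀ hx₁ he
  have hDy := abs_normSqIncr_le ha₀ ha₁ hy₀ hy₁ he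
  have hΔD := abs_normSqIncr_sub_le ha₀ ha₁ hx₀ hx₁ hy₀ hy₁ hδ₀ hδ₁ he
  have hsDx : |2*(a₀^2 + a₁^2) + normSqIncr a₀ a₁ x₀ x₁| ≤ 10 :=
    (abs_add_le _ _).trans (by linarith)
  have hsDy : |2*(a₀^2 + a₁^2) + normSqIncr a₀ a₁ y₀ y₁| ≤ 10 :=
    (abs_add_le _ _).trans (by linarith)
  have h₁ := abs_mul_le_of_abs_le (abs_mul_le_of_abs_le hs ha₀)
    (abs_sq_add_sq_sub_le hx₀ hx₁ hy₀ hy₁ hδ₀ hδ₁)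
  have h₂ := abs_mul_le_of_abs_le (abs_mul_sub_mul_le hDx hDy hΔD hΔD) ha₀
  have h₃ := abs_mul_sub_mul_le (abs_mul_le_of_abs_le hsDx hx₀) hDy hΔD
    (abs_mul_sub_mul_le hx₀ hsDy (by rwa [add_sub_add_left_eq_sub] :
      |(2*(a₀^2 + a₁^2) + normSqIncr a₀ a₁ x₀ x₁) - (2*(a₀^2 + a₁^2) + normSqIncr a₀ a₁ y₀ y₁)|
        ≤ 8*δ) hδ₀)
  have he₁ : e*(e*δ) ≤ e*δ := mul_le_of_le_one_left (mul_nonneg he₀ hδ) he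
  rw [hid]
  refine (abs_add_three _ _ _).trans ?_
  linarith

lemma abs_nonlinRem_sub_le (hn : 1 ≤ n) (hξ₀ : 0 ≤ ξ) (hξ₁ : ξ ≤ 1)
    (ha₀ : |a₀| ≤ 1) (ha₁ : |a₁| ≤ 1) (ha₃ : |a₃| ≤ 3*n)
    (hx₀ : |x₀| ≤ e) (hx₁ : |x₁| ≤ e) (hx₃ : |x₃| ≤ n*e) (hy₀ : |y₀| ≤ e) (hy₁ : |y₁| ≤ e)
    (hδ₀ : |x₀ - y₀| ≤ δ) (hδ₁ : |x₁ - y₁| ≤ δ) (hδ₃ : |x₃ - y₃| ≤ n*δ) (he : e ≤ 1) :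
    |nonlinRem ξ a₀ a₁ a₃ x₀ x₁ x₃ - nonlinRem ξ a₀ a₁ a₃ y₀ y₁ y₃| ≤ 4000*ξ^3*n*e*δ := by
  have hc := abs_cubicRem_sub_le ha₀ ha₁ ha₃ hx₀ hx₁ hx₃ hy₀ hy₁ hδ₀ hδ₁ hδ₃ he
  have hq := abs_quinticRem_sub_le ha₀ ha₁ hx₀ hx₁ hy₀ hy₁ hδ₀ hδ₁ he
  have heδ : 0 ≤ e*δ := mul_nonneg ((abs_nonneg _).trans hx₀) ((abs_nonneg _).trans hδ₀)
  have hξ : ξ^6 ≤ ξ^3 := pow_le_pow_of_le_one hξ₀ hξ₁ (by norm_num)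
  calc |nonlinRem ξ a₀ a₁ a₃ x₀ x₁ x₃ - nonlinRem ξ a₀ a₁ a₃ y₀ y₁ y₃|
        = |8*ξ^3 * (cubicRem a₀ a₁ a₃ x₀ x₁ x₃ - cubicRem a₀ a₁ a₃ y₀ y₁ y₃)
            + 12*ξ^6 * (quinticRem a₀ a₁ x₀ x₁ - quinticRem a₀ a₁ y₀ y₁)| := by
          unfold nonlinRem; ring_nf
    _ ≤ 8*ξ^3 * (26*n*e*δ) + 12*ξ^6 * (300*e*δ) := by
          refine (abs_add_le _ _).trans (add_le_add ?_ ?_) <;>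
            rw [abs_mul, abs_of_nonneg (by positivity)] <;> gcongr
    _ ≤ 4000*ξ^3*n*e*δ := by
          have h₁ : ξ^6*(e*δ) ≤ ξ^3*(e*δ) := mul_le_mul_of_nonneg_right hξ heδ
          have h₂ : ξ^3*(e*δ) ≤ ξ^3*(e*δ)*n :=
            le_mul_of_one_le_right (by positivity) hn
          have h₃ : 0 ≤ ξ^3*(e*δ) := by positivity
          linarith

end RemainderBounds

/-- `G0map n ξ θ₀ U T` is `taylorRem n ξ (U0e n ξ θ₀ T) (U T)` by definition. -/
def taylorRem (n : ℕ) (ξ : ℝ) (a x : V4) : V4 :=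
  F0 n ξ (a + x) - F0 n ξ a - (DF0 n ξ a).mulVec x

/-- The last component of `F₀` is the third one with `(𝒰, 𝒱, 𝒱')` replaced by `(𝒱, 𝒰, -𝒰')`. -/
lemma taylorRem_eq (n : ℕ) (ξ : ℝ) (a x : V4) :
    taylorRem n ξ a x = ![0, 0, nonlinRem ξ (a 0) (a 1) (a 3) (x 0) (x 1) (x 3),
      nonlinRem ξ (a 1) (a 0) (-a 2) (x 1) (x 0) (-x 2)] := by
  ext i
  fin_cases i <;>
    simp (disch := fun_prop) [taylorRem, nonlinRem, cubicRem, quinticRem, normSqIncr, DF0, F0,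
      Matrix.mulVec, dotProduct, Fin.sum_univ_four, Function.update_apply] <;>
    ring

def wnormAt (n : ℕ) (u : V4) : ℝ := n*|u 0| + n*|u 1| + |u 2| + |u 3|

lemma wnormAt_nonneg (n : ℕ) (u : V4) : 0 ≤ wnormAt n u := by
  unfold wnormAt; positivity

lemma abs_le_of_wnormAt_le {n : ℕ} (hn : 0 < n) {u : V4} {e : ℝ} (hu : wnormAt n u ≤ n*e) :
    |u 0| ≤ e ∧ |u 1| ≤ e ∧ |u 2| ≤ n*e ∧ |u 3| ≤ n*e := by
  have hn' : (0:ℝ) < n := Nat.cast_pos.mpr hn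
  unfold wnormAt at hu
  have h₀ := mul_nonneg hn'.le (abs_nonneg (u 0))
  have h₁ := mul_nonneg hn'.le (abs_nonneg (u 1))
  have h₂ := abs_nonneg (u 2)
  have h₃ := abs_nonneg (u 3)
  refine ⟨le_of_mul_le_mul_left ?_ hn', le_of_mul_le_mul_left ?_ hn', ?_, ?_⟩ <;> linarith

lemma wnorm_le_of_forall {n : ℕ} {U : ℝ → V4} {c : ℝ} (hc : 0 ≤ c)
    (h : ∀ T ∈ Icc 0 (2*π), wnormAt n (U T) ≤ c) : wnorm n U ≤ c :=
  Real.sSup_le (by rintro _ ⟨T, hT, rfl⟩; exact h T hT) hc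

lemma wnormAt_le_wnorm {n : ℕ} {U : ℝ → V4} (hU : ContinuousOn U (Icc 0 (2*π)))
    {T : ℝ} (hT : T ∈ Icc 0 (2*π)) : wnormAt n (U T) ≤ wnorm n U := by
  have hc : ContinuousOn (fun T => wnormAt n (U T)) (Icc 0 (2*π)) := by
    unfold wnormAt; fun_prop
  exact le_csSup (isCompact_Icc.image_of_continuousOn hc).bddAbove (mem_image_of_mem _ hT)

lemma wnorm_nonneg {n : ℕ} {U : ℝ → V4} (hU : ContinuousOn U (Icc 0 (2*π))) :
    0 ≤ wnorm n U :=
  (wnormAt_nonneg n (U 0)).trans (wnormAt_le_wnorm hU ⟨le_rfl, by positivity⟩)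

lemma wnormAt_taylorRem_sub_le {n : ℕ} (hn : 1 ≤ n) {ξ : ℝ} (hξ₀ : 0 ≤ ξ) (hξ₁ : ξ ≤ 1)
    {a u v : V4} (ha₀ : |a 0| ≤ 1) (ha₁ : |a 1| ≤ 1) (ha₂ : |a 2| ≤ 3*n) (ha₃ : |a 3| ≤ 3*n)
    {ε : ℝ} (hε : ε ≤ n) (hu : wnormAt n u ≤ ε) (hv : wnormAt n v ≤ ε) :
    wnormAt n (taylorRem n ξ a u - taylorRem n ξ a v) ≤ 8000*ξ^3*ε*wnormAt n (u - v)/n := by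
  have hn₀ : (0:ℝ) < n := Nat.cast_pos.mpr hn
  have hnR : (1:ℝ) ≤ n := Nat.one_le_cast.mpr hn
  have hscale (c : ℝ) : c = n*(c/n) := by field_simp
  set d := wnormAt n (u - v)
  obtain ⟨hu₀, hu₁, hu₂, hu₃⟩ := abs_le_of_wnormAt_le hn (hu.trans_eq (hscale ε))
  obtain ⟨hv₀, hv₁, -, -⟩ := abs_le_of_wnormAt_le hn (hv.trans_eq (hscale ε))
  obtain ⟨hd₀, hd₁, hd₂, hd₃⟩ := abs_le_of_wnormAt_le hn (hscale d).le
  simp only [Pi.sub_apply] at hd₀ hd₁ hd₂ hd₃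
  have he : ε/n ≤ 1 := div_le_one_of_le₀ hε hn₀.le
  have h₂ := abs_nonlinRem_sub_le hnR hξ₀ hξ₁ ha₀ ha₁ ha₃ hu₀ hu₁ hu₃ hv₀ hv₁ hd₀ hd₁ hd₃ he
  have h₃ := abs_nonlinRem_sub_le hnR hξ₀ hξ₁ ha₁ ha₀ ((abs_neg _).trans_le ha₂) hu₁ hu₀
    ((abs_neg _).trans_le hu₂) hv₁ hv₀ hd₁ hd₀ (by rw [neg_sub_neg, abs_sub_comm]; exact hd₂) he
  rw [taylorRem_eq, taylorRem_eq]
  simp only [wnormAt, Pi.sub_apply, Matrix.cons_val_zero, Matrix.cons_val_one, Matrix.cons_val_two,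
    Matrix.cons_val_three, Matrix.head_cons, Matrix.tail_cons, sub_self, abs_zero, mul_zero,
    zero_add]
  calc _ ≤ 2*(4000*ξ^3*n*(ε/n)*(d/n)) := by linarith
    _ = 8000*ξ^3*ε*d/n := by field_simp; ring

lemma hasDerivAt_tOf {n : ℕ} (hn : n ≠ 0) (ξ T : ℝ) :
    HasDerivAt (tOf n ξ) (4 * sin (n*T)^2 * ξ^3) T := by
  have hn' : (n:ℝ) ≠ 0 := Nat.cast_ne_zero.mpr hn
  have hnT := (hasDerivAt_id' T).const_mul (n:ℝ)
  refine ((((hasDerivAt_id' T).fun_sub ((hnT.cos.fun_mul hnT.sin).div_const (n:ℝ))).const_mul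
    2).mul_const (ξ^3)).congr_deriv ?_
  field_simp
  linear_combination (-2 * ξ^3) * sin_sq_add_cos_sq (n*T)

lemma hasDerivAt_U0s {n : ℕ} (hn : n ≠ 0) (ξ θ₀ T : ℝ) :
    HasDerivAt (U0s n ξ θ₀) (2*ξ^3 * (sin (n*T)^3 * sin (θ₀ - tOf n ξ T/2))
      + n * (cos (θ₀ - tOf n ξ T/2) * cos (n*T))) T := by
  refine ((((hasDerivAt_tOf hn ξ T).div_const 2).const_sub θ₀).cos.fun_mul
    ((hasDerivAt_id' T).const_mul (n:ℝ)).sin).congr_deriv ?_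
  ring

lemma hasDerivAt_V0s {n : ℕ} (hn : n ≠ 0) (ξ θ₀ T : ℝ) :
    HasDerivAt (V0s n ξ θ₀) (2*ξ^3 * (-(sin (n*T)^3 * cos (θ₀ - tOf n ξ T/2)))
      + n * (sin (θ₀ - tOf n ξ T/2) * cos (n*T))) T := by
  refine ((((hasDerivAt_tOf hn ξ T).div_const 2).const_sub θ₀).sin.fun_mul
    ((hasDerivAt_id' T).const_mul (n:ℝ)).sin).congr_deriv ?_
  ring

lemma abs_U0e_le {n : ℕ} (hn : 1 ≤ n) {ξ : ℝ} (hξ : |ξ| ≤ 1) (θ₀ T : ℝ) :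
    |U0e n ξ θ₀ T 0| ≤ 1 ∧ |U0e n ξ θ₀ T 1| ≤ 1 ∧
      |U0e n ξ θ₀ T 2| ≤ 3*n ∧ |U0e n ξ θ₀ T 3| ≤ 3*n := by
  have hn₀ : n ≠ 0 := Nat.one_le_iff_ne_zero.mp hn
  have hnR : (1:ℝ) ≤ n := Nat.one_le_cast.mpr hn
  have hsin3 : |sin (n*T)^3| ≤ 1 := by
    rw [abs_pow]; exact pow_le_one₀ (abs_nonneg _) (abs_sin_le_one _)
  have hξ3 : |2*ξ^3| ≤ 2 := by
    rw [abs_mul, abs_pow, abs_two]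
    linarith [pow_le_one₀ (n := 3) (abs_nonneg ξ) hξ]
  have hcoef : |2*ξ^3| + |(n:ℝ)| ≤ 3*n := by rw [Nat.abs_cast]; linarith
  refine ⟨?_, ?_, ?_, ?_⟩
  · simpa [U0e, U0s] using abs_mul_le_of_abs_le (abs_cos_le_one _) (abs_sin_le_one _)
  · simpa [U0e, V0s] using abs_mul_le_of_abs_le (abs_sin_le_one _) (abs_sin_le_one _)
  · simp only [U0e, Matrix.cons_val_two, Matrix.tail_cons, Matrix.head_cons,
      (hasDerivAt_U0s hn₀ ξ θ₀ T).deriv]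
    exact (abs_mul_add_mul_le (by simpa using abs_mul_le_of_abs_le hsin3 (abs_sin_le_one _))
      (by simpa using abs_mul_le_of_abs_le (abs_cos_le_one _) (abs_cos_le_one _))).trans hcoef
  · simp only [U0e, Matrix.cons_val_three, Matrix.tail_cons, Matrix.head_cons,
      (hasDerivAt_V0s hn₀ ξ θ₀ T).deriv]
    exact (abs_mul_add_mul_le (by simpa using abs_mul_le_of_abs_le hsin3 (abs_cos_le_one _))
      (by simpa using abs_mul_le_of_abs_le (abs_sin_le_one _) (abs_cos_le_one _))).trans hcoef

/-- **Lemma (bound on `𝒢₀`)**: on the ball of radius `2M₁μξ⁶`, the map `𝒢₀` is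
Lipschitz with constant `(Mμ/n)ξ⁹`, uniformly in `μ ∈ (0,1)`, `n ≥ 1` and `θ₀`. -/
theorem G0map_lipschitz :
    ∀ M₁ : ℝ, 0 < M₁ → ∃ ξ₀ M : ℝ, 0 < ξ₀ ∧ 0 < M ∧
      ∀ ξ : ℝ, 0 < ξ → ξ < ξ₀ → ∀ μ ∈ Set.Ioo (0:ℝ) 1, ∀ n : ℕ, 1 ≤ n → ∀ θ₀ : ℝ,
        ∀ Up Um : ℝ → V4,
          ContinuousOn Up (Set.Icc 0 (2*π)) → wnorm n Up ≤ 2*M₁*μ*ξ^6 →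
          ContinuousOn Um (Set.Icc 0 (2*π)) → wnorm n Um ≤ 2*M₁*μ*ξ^6 →
          wnorm n (fun T => G0map n ξ θ₀ Up T - G0map n ξ θ₀ Um T) ≤
            (M * μ / (n:ℝ)) * ξ^9 * wnorm n (fun T => Up T - Um T) := by
  intro M₁ hM₁
  refine ⟨min 1 (1/(2*M₁)), 16000*M₁, by positivity, by positivity, ?_⟩
  rintro ξ hξ₀ hξ μ ⟨hμ₀, hμ₁⟩ n hn θ₀ Up Um hUp hUp_le hUm hUm_le
  have hξ₁ : ξ ≤ 1 := hξ.le.trans (min_le_left _ _)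
  have hε : 2*M₁*μ*ξ^6 ≤ n :=
    calc 2*M₁*μ*ξ^6 ≤ 2*M₁*1*ξ := by gcongr; exact pow_le_of_le_one hξ₀.le hξ₁ (by norm_num)
      _ ≤ 1 := by linarith [(lt_div_iff₀' (by positivity)).mp (hξ.trans_le (min_le_right _ _))]
      _ ≤ n := Nat.one_le_cast.mpr hn
  refine wnorm_le_of_forall (by have := wnorm_nonneg (n := n) (hUp.sub hUm); positivity)
    fun T hT => ?_
  obtain ⟨ha₀, ha₁, ha₂, ha₃⟩ := abs_U0e_le hn (abs_le.mpr ⟨by linarith, hξ₁⟩) θ₀ T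
  calc wnormAt n (G0map n ξ θ₀ Up T - G0map n ξ θ₀ Um T)
      ≤ 8000*ξ^3*(2*M₁*μ*ξ^6)*wnormAt n (Up T - Um T)/n :=
        wnormAt_taylorRem_sub_le hn hξ₀.le hξ₁ ha₀ ha₁ ha₂ ha₃ hε
          ((wnormAt_le_wnorm hUp hT).trans hUp_le) ((wnormAt_le_wnorm hUm hT).trans hUm_le)
    _ ≤ 8000*ξ^3*(2*M₁*μ*ξ^6)*wnorm n (fun T => Up T - Um T)/n := by
        gcongr
        exact wnormAt_le_wnorm (hUp.sub hUm) hT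
    _ = 16000*M₁*μ/n*ξ^9*wnorm n (fun T => Up T - Um T) := by ring

end
end

section
/- For every M₁ > 0 there exist ξ₀ > 0 and a constant M > 0 such that for all 0 < ξ < ξ₀, all μ ∈ (0,1), all integers n ≥ 1, all θ₀ ∈ ℝ and all continuous functions 𝐔⊕, 𝐔⊖ : [0,2π] → ℝ⁴ with ‖𝐔⊕‖ ≤ 2M₁μξ⁶ and ‖𝐔⊖‖ ≤ 2M₁μξ⁶, the map 𝒢₁ defined by 𝒢₁(𝐔)(T) = μ·F₁(𝐔₀ᵉ(T)+𝐔(T)) satisfies ‖𝒢₁(𝐔⊕) − 𝒢₁(𝐔⊖)‖ ≤ (M·μ·ξ⁶/n)·‖𝐔⊕ − 𝐔⊖‖. -/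
open Real Set

noncomputable section

/-- The map `𝒢₁(𝐔)(T) = μ F₁(𝐔₀ᵉ(T)+𝐔(T))`. -/
def G1map (μ : ℝ) (n : ℕ) (ξ θ₀ : ℝ) (U : ℝ → V4) (T : ℝ) : V4 :=
  μ • F1 μ n ξ (U0e n ξ θ₀ T + U T)

/-! The perturbation `F₁` depends on `μ`, `n`, `ξ` only through `ξ⁶` and
`a = (1-μ)^{1/3} ξ² / n^{2/3} ≤ ξ²`: since `r₂² = 1 + 4a(𝒰²-𝒱²) + 4a²(𝒰²+𝒱²)²`, the
coefficient of `𝒰` (resp. `𝒱`) in the last two components of `F₁` is `2ξ⁶` times a function of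
`(a, 𝒰, 𝒱)` whose apparent singularities at `a = 0` are removable. That function is smooth on the
compact convex box `a ∈ [0, 1/100]`, `|𝒰|, |𝒱| ≤ 2`, hence Lipschitz there with a constant
independent of `μ`, `n`, `ξ`, `θ₀`. For `ξ` small both `𝐔₀ᵉ + 𝐔⊕` and `𝐔₀ᵉ + 𝐔⊖` stay in that
box, and the factor `1/n` comes from `n (|Δ𝒰| + |Δ𝒱|) ≤ ‖𝐔⊕ − 𝐔⊖‖`. -/

def r2Radicand (a U V : ℝ) : ℝ := 1 + 4*a*(U^2 - V^2) + 4*a^2*(U^2 + V^2)^2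

def perturbScale (μ : ℝ) (n : ℕ) (ξ : ℝ) : ℝ := (1-μ)^((1:ℝ)/3) * ξ^2 / (n:ℝ)^((2:ℝ)/3)

/-- `ξ⁻⁶` times the bracket of the third (`σ = 1`) or fourth (`σ = -1`) component of `F₁`,
as a function of `a = perturbScale μ n ξ` (see `F1Coeff_eq`). -/
def F1Coeff (σ a U V : ℝ) : ℝ :=
  let r := √(r2Radicand a U V)
  (-4*(U^2+V^2)^2/(r*(1+r)) - 4*(U^2+V^2)^2/r^3
    + (4*(U^2-V^2) + 4*a*(U^2+V^2)^2) *
      (2*(U^2-V^2)*(r+2)/(r*(1+r)^2) + σ*(2*(U^2+V^2)*(r^2+r+1)/(r^3*(1+r)))))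

def F1Reduced (x : ℝ × ℝ × ℝ) : ℝ × ℝ :=
  (F1Coeff 1 x.1 x.2.1 x.2.2 * x.2.1, F1Coeff (-1) x.1 x.2.1 x.2.2 * x.2.2)

lemma F1Coeff_eq (σ : ℝ) {a U V : ℝ} (ha : a ≠ 0) (hR : 0 < r2Radicand a U V) :
    F1Coeff σ a U V =
      (1/√(r2Radicand a U V) - 1)/a^2 - 4*(U^2+V^2)^2/√(r2Radicand a U V)^3
        + (2*(U^2-V^2) + σ*(2*(U^2+V^2)) - σ*(2*(U^2+V^2))/√(r2Radicand a U V)^3)/a := by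
  have hr : 0 < √(r2Radicand a U V) := Real.sqrt_pos.2 hR
  have hr2 : √(r2Radicand a U V)^2 = r2Radicand a U V := Real.sq_sqrt hR.le
  unfold F1Coeff
  generalize √(r2Radicand a U V) = r at hr hr2 ⊢
  unfold r2Radicand at hr2
  generalize U^2 - V^2 = d at hr2 ⊢
  generalize U^2 + V^2 = s at hr2 ⊢
  -- Eliminating `d` through `r² = r2Radicand a U V` leaves an identity of rational functions.
  have hd : d = (r^2 - 1 - 4*a^2*s^2)/(4*a) := by field_simp; linarith
  subst hd
  have : 1 + r ≠ 0 := by positivity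
  field_simp
  ring

lemma rpow_two_thirds_eq_sq {x : ℝ} (hx : 0 ≤ x) : x^((2:ℝ)/3) = (x^((1:ℝ)/3))^2 := by
  rw [← Real.rpow_mul_natCast hx]; norm_num

lemma rpow_four_thirds_eq_sq {x : ℝ} (hx : 0 ≤ x) : x^((4:ℝ)/3) = (x^((2:ℝ)/3))^2 := by
  rw [← Real.rpow_mul_natCast hx]; norm_num

lemma r2_eq_sqrt_r2Radicand {μ : ℝ} (hμ : μ ≤ 1) (n : ℕ) (ξ U V : ℝ) :
    r2 μ n ξ U V = √(r2Radicand (perturbScale μ n ξ) U V) := by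
  rw [r2, r2Radicand, perturbScale, rpow_two_thirds_eq_sq (x := 1 - μ) (by linarith),
    rpow_four_thirds_eq_sq n.cast_nonneg]
  congr 1
  ring

lemma F1_eq_smul_F1Reduced {μ : ℝ} (hμ : μ < 1) {n : ℕ} (hn : n ≠ 0) {ξ : ℝ} (hξ : ξ ≠ 0)
    {v : V4} (hR : 0 < r2Radicand (perturbScale μ n ξ) (v 0) (v 1)) :
    (F1 μ n ξ v 2, F1 μ n ξ v 3) = (2*ξ^6) • F1Reduced (perturbScale μ n ξ, v 0, v 1) := by
  have hc : 0 < (1-μ)^((1:ℝ)/3) := Real.rpow_pos_of_pos (by linarith) _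
  have hm : 0 < (n:ℝ)^((2:ℝ)/3) := Real.rpow_pos_of_pos (by positivity) _
  have ha : perturbScale μ n ξ ≠ 0 := by unfold perturbScale; positivity
  have hr : 0 < √(r2Radicand (perturbScale μ n ξ) (v 0) (v 1)) := Real.sqrt_pos.2 hR
  simp only [F1, F1Reduced, r2_eq_sqrt_r2Radicand hμ.le, F1Coeff_eq _ ha hR,
    rpow_two_thirds_eq_sq (by linarith : 0 ≤ 1 - μ), rpow_four_thirds_eq_sq n.cast_nonneg]
  generalize √(r2Radicand (perturbScale μ n ξ) (v 0) (v 1)) = r at hr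
  unfold perturbScale
  ext <;> simp only [Matrix.cons_val, Prod.smul_mk, smul_eq_mul] <;> field_simp <;> ring

def reducedBox : Set (ℝ × ℝ × ℝ) := Icc (0, -2, -2) (1/100, 2, 2)

lemma r2Radicand_pos_of_mem_reducedBox {x : ℝ × ℝ × ℝ} (hx : x ∈ reducedBox) :
    0 < r2Radicand x.1 x.2.1 x.2.2 := by
  obtain ⟨⟨ha0, -, hV0⟩, ⟨ha1, -, hV1⟩⟩ := hx
  have hV : x.2.2^2 ≤ 4 := by nlinarith
  unfold r2Radicand
  nlinarith [mul_le_mul_of_nonneg_left hV ha0, sq_nonneg x.2.1,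
    sq_nonneg (x.1 * (x.2.1^2 + x.2.2^2))]

lemma contDiffOn_F1Reduced : ContDiffOn ℝ 1 F1Reduced reducedBox := by
  intro x hx
  have hR := r2Radicand_pos_of_mem_reducedBox hx
  have hr : 0 < √(r2Radicand x.1 x.2.1 x.2.2) := Real.sqrt_pos.2 hR
  have hr1 : 0 < 1 + √(r2Radicand x.1 x.2.1 x.2.2) := by positivity
  refine ContDiffAt.contDiffWithinAt ?_
  unfold F1Reduced F1Coeff r2Radicand at *
  fun_prop (disch := simp [hr.ne', hr1.ne', hR.ne'])

lemma exists_lipschitzOnWith_F1Reduced : ∃ K, LipschitzOnWith K F1Reduced reducedBox :=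
  contDiffOn_F1Reduced.exists_lipschitzOnWith one_ne_zero (convex_Icc _ _) isCompact_Icc

lemma perturbScale_mem_Icc {μ : ℝ} (hμ : μ ∈ Icc (0:ℝ) 1) {n : ℕ} (hn : n ≠ 0) {ξ : ℝ}
    (hξ : |ξ| ≤ 1/10) : perturbScale μ n ξ ∈ Icc 0 (1/100) := by
  have hc0 : 0 ≤ (1-μ)^((1:ℝ)/3) := Real.rpow_nonneg (by linarith [hμ.2]) _
  have hc1 : (1-μ)^((1:ℝ)/3) ≤ 1 :=
    Real.rpow_le_one (by linarith [hμ.2]) (by linarith [hμ.1]) (by norm_num)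
  have hm : 1 ≤ (n:ℝ)^((2:ℝ)/3) :=
    Real.one_le_rpow (by exact_mod_cast Nat.one_le_iff_ne_zero.2 hn) (by norm_num)
  refine ⟨by unfold perturbScale; positivity, ?_⟩
  calc perturbScale μ n ξ ≤ (1-μ)^((1:ℝ)/3) * ξ^2 := div_le_self (by positivity) hm
    _ ≤ ξ^2 := mul_le_of_le_one_left (sq_nonneg ξ) hc1
    _ ≤ 1/100 := by nlinarith [sq_abs ξ, abs_nonneg ξ]

lemma dist_le_abs_sub_add_abs_sub (p q : ℝ × ℝ) : dist p q ≤ |p.1 - q.1| + |p.2 - q.2| := by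
  rw [Prod.dist_eq, Real.dist_eq, Real.dist_eq]
  exact max_le (le_add_of_nonneg_right (abs_nonneg _)) (le_add_of_nonneg_left (abs_nonneg _))

lemma abs_sub_add_abs_sub_le_two_mul_dist (p q : ℝ × ℝ) :
    |p.1 - q.1| + |p.2 - q.2| ≤ 2 * dist p q := by
  rw [Prod.dist_eq, Real.dist_eq, Real.dist_eq]
  linarith [le_max_left |p.1 - q.1| |p.2 - q.2|, le_max_right |p.1 - q.1| |p.2 - q.2|]

lemma exists_F1_lipschitz_on_box : ∃ L : ℝ, 0 < L ∧
    ∀ μ ∈ Ico (0:ℝ) 1, ∀ n : ℕ, n ≠ 0 → ∀ ξ : ℝ, ξ ≠ 0 → |ξ| ≤ 1/10 →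
      ∀ v w : V4, |v 0| ≤ 2 → |v 1| ≤ 2 → |w 0| ≤ 2 → |w 1| ≤ 2 →
        |F1 μ n ξ v 2 - F1 μ n ξ w 2| + |F1 μ n ξ v 3 - F1 μ n ξ w 3|
          ≤ L * ξ^6 * (|v 0 - w 0| + |v 1 - w 1|) := by
  obtain ⟨K, hK⟩ := exists_lipschitzOnWith_F1Reduced
  refine ⟨4*K + 1, by positivity, fun μ hμ n hn ξ hξ hξ1 v w hv0 hv1 hw0 hw1 => ?_⟩
  obtain ⟨ha0, ha1⟩ := perturbScale_mem_Icc (Ico_subset_Icc_self hμ) hn hξ1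
  rw [abs_le] at hv0 hv1 hw0 hw1
  have hx : (perturbScale μ n ξ, v 0, v 1) ∈ reducedBox :=
    ⟨⟨ha0, hv0.1, hv1.1⟩, ⟨ha1, hv0.2, hv1.2⟩⟩
  have hy : (perturbScale μ n ξ, w 0, w 1) ∈ reducedBox :=
    ⟨⟨ha0, hw0.1, hw1.1⟩, ⟨ha1, hw0.2, hw1.2⟩⟩
  calc |F1 μ n ξ v 2 - F1 μ n ξ w 2| + |F1 μ n ξ v 3 - F1 μ n ξ w 3|
      ≤ 2 * dist (F1 μ n ξ v 2, F1 μ n ξ v 3) (F1 μ n ξ w 2, F1 μ n ξ w 3) :=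
        abs_sub_add_abs_sub_le_two_mul_dist (_, _) (_, _)
    _ = 2 * (2*ξ^6 * dist (F1Reduced (perturbScale μ n ξ, v 0, v 1))
          (F1Reduced (perturbScale μ n ξ, w 0, w 1))) := by
        rw [F1_eq_smul_F1Reduced hμ.2 hn hξ (r2Radicand_pos_of_mem_reducedBox hx),
          F1_eq_smul_F1Reduced hμ.2 hn hξ (r2Radicand_pos_of_mem_reducedBox hy), dist_smul₀,
          Real.norm_of_nonneg (by positivity)]
    _ ≤ 2 * (2*ξ^6 * (K * (|v 0 - w 0| + |v 1 - w 1|))) := by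
        gcongr
        refine (hK.dist_le_mul _ hx _ hy).trans ?_
        gcongr
        exact dist_prod_same_left.trans_le (dist_le_abs_sub_add_abs_sub _ _)
    _ ≤ (4*K + 1) * ξ^6 * (|v 0 - w 0| + |v 1 - w 1|) := by
        nlinarith [abs_nonneg (v 0 - w 0), abs_nonneg (v 1 - w 1), pow_nonneg (sq_nonneg ξ) 3]

lemma F1_apply_zero (μ : ℝ) (n : ℕ) (ξ : ℝ) (v : V4) : F1 μ n ξ v 0 = 0 := rfl

lemma F1_apply_one (μ : ℝ) (n : ℕ) (ξ : ℝ) (v : V4) : F1 μ n ξ v 1 = 0 := rfl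

lemma abs_U0e_zero_le_one (n : ℕ) (ξ θ₀ T : ℝ) : |U0e n ξ θ₀ T 0| ≤ 1 := by
  simp only [U0e, U0s, Matrix.cons_val_zero, abs_mul]
  exact mul_le_one₀ (abs_cos_le_one _) (abs_nonneg _) (abs_sin_le_one _)

lemma abs_U0e_one_le_one (n : ℕ) (ξ θ₀ T : ℝ) : |U0e n ξ θ₀ T 1| ≤ 1 := by
  simp only [U0e, V0s, Matrix.cons_val_one, Matrix.cons_val_zero, abs_mul]
  exact mul_le_one₀ (abs_sin_le_one _) (abs_nonneg _) (abs_sin_le_one _)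

section wnorm

variable {n : ℕ} {U : ℝ → V4}

lemma le_wnorm (hU : ContinuousOn U (Icc 0 (2*π))) {T : ℝ} (hT : T ∈ Icc 0 (2*π)) :
    (n:ℝ)*|U T 0| + (n:ℝ)*|U T 1| + |U T 2| + |U T 3| ≤ wnorm n U := by
  refine le_csSup (isCompact_Icc.bddAbove_image ?_) (mem_image_of_mem _ hT)
  have h (i : Fin 4) : ContinuousOn (fun T => U T i) (Icc 0 (2*π)) :=
    (continuous_apply i).comp_continuousOn hU
  fun_prop

lemma natCast_mul_le_wnorm (hU : ContinuousOn U (Icc 0 (2*π))) {T : ℝ}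
    (hT : T ∈ Icc 0 (2*π)) : (n:ℝ) * (|U T 0| + |U T 1|) ≤ wnorm n U := by
  linarith [le_wnorm (n := n) hU hT, abs_nonneg (U T 2), abs_nonneg (U T 3)]

lemma wnorm_le {C : ℝ}
    (h : ∀ T ∈ Icc 0 (2*π), (n:ℝ)*|U T 0| + (n:ℝ)*|U T 1| + |U T 2| + |U T 3| ≤ C) :
    wnorm n U ≤ C :=
  csSup_le ((nonempty_Icc.2 (by positivity)).image _) (forall_mem_image.2 h)

lemma abs_U0e_add_le_two (hn : 1 ≤ n) (hU : ContinuousOn U (Icc 0 (2*π))) (hU1 : wnorm n U ≤ 1)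
    (ξ θ₀ : ℝ) {T : ℝ} (hT : T ∈ Icc 0 (2*π)) :
    |(U0e n ξ θ₀ T + U T) 0| ≤ 2 ∧ |(U0e n ξ θ₀ T + U T) 1| ≤ 2 := by
  have hn1 : (1:ℝ) ≤ n := by exact_mod_cast hn
  have hU01 : |U T 0| + |U T 1| ≤ 1 := by
    nlinarith [natCast_mul_le_wnorm (n := n) hU hT, abs_nonneg (U T 0), abs_nonneg (U T 1)]
  simp only [Pi.add_apply]
  constructor <;> refine (abs_add_le _ _).trans ?_
  · linarith [abs_U0e_zero_le_one n ξ θ₀ T, abs_nonneg (U T 1)]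
  · linarith [abs_U0e_one_le_one n ξ θ₀ T, abs_nonneg (U T 0)]

end wnorm

lemma G1map_sub_weighted_eq {μ : ℝ} (hμ : 0 ≤ μ) (n : ℕ) (ξ θ₀ : ℝ) (Up Um : ℝ → V4) (T : ℝ) :
    (n:ℝ)*|(G1map μ n ξ θ₀ Up T - G1map μ n ξ θ₀ Um T) 0|
      + (n:ℝ)*|(G1map μ n ξ θ₀ Up T - G1map μ n ξ θ₀ Um T) 1|
      + |(G1map μ n ξ θ₀ Up T - G1map μ n ξ θ₀ Um T) 2|
      + |(G1map μ n ξ θ₀ Up T - G1map μ n ξ θ₀ Um T) 3|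
    = μ * (|F1 μ n ξ (U0e n ξ θ₀ T + Up T) 2 - F1 μ n ξ (U0e n ξ θ₀ T + Um T) 2|
      + |F1 μ n ξ (U0e n ξ θ₀ T + Up T) 3 - F1 μ n ξ (U0e n ξ θ₀ T + Um T) 3|) := by
  simp only [G1map, Pi.sub_apply, Pi.smul_apply, smul_eq_mul, ← mul_sub, abs_mul,
    abs_of_nonneg hμ, F1_apply_zero, F1_apply_one, sub_self, abs_zero, mul_zero, zero_add, mul_add]

/-- **Lemma (bound on `𝒢₁`)**: on the ball of radius `2M₁μξ⁶`, the map `𝒢₁` is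
Lipschitz with constant `Mμξ⁶/n`, uniformly in `μ ∈ (0,1)`, `n ≥ 1` and `θ₀`. -/
theorem G1map_lipschitz :
    ∀ M₁ : ℝ, 0 < M₁ → ∃ ξ₀ M : ℝ, 0 < ξ₀ ∧ 0 < M ∧
      ∀ ξ : ℝ, 0 < ξ → ξ < ξ₀ → ∀ μ ∈ Set.Ioo (0:ℝ) 1, ∀ n : ℕ, 1 ≤ n → ∀ θ₀ : ℝ,
        ∀ Up Um : ℝ → V4,
          ContinuousOn Up (Set.Icc 0 (2*π)) → wnorm n Up ≤ 2*M₁*μ*ξ^6 →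
          ContinuousOn Um (Set.Icc 0 (2*π)) → wnorm n Um ≤ 2*M₁*μ*ξ^6 →
          wnorm n (fun T => G1map μ n ξ θ₀ Up T - G1map μ n ξ θ₀ Um T) ≤
            (M * μ * ξ^6 / (n:ℝ)) * wnorm n (fun T => Up T - Um T) := by
  intro M₁ hM₁
  obtain ⟨L, hL, hF1⟩ := exists_F1_lipschitz_on_box
  refine ⟨min (1/10) (1/(2*M₁)), L, by positivity, hL, ?_⟩
  intro ξ hξ hξ₀ μ hμ n hn θ₀ Up Um hUpc hUpb hUmc hUmb
  have hξ1 : ξ ≤ 1/10 := hξ₀.le.trans (min_le_left _ _)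
  have hsmall : 2*M₁*μ*ξ^6 ≤ 1 :=
    calc 2*M₁*μ*ξ^6 ≤ 2*M₁*1*ξ := by
          gcongr
          · exact hμ.2.le
          · exact pow_le_of_le_one hξ.le (by linarith) (by norm_num)
      _ ≤ 1 := by
          have := hξ₀.le.trans (min_le_right _ _)
          rw [le_div_iff₀ (by positivity)] at this
          linarith
  refine wnorm_le fun T hT => ?_
  obtain ⟨hP0, hP1⟩ := abs_U0e_add_le_two hn hUpc (hUpb.trans hsmall) ξ θ₀ hT
  obtain ⟨hQ0, hQ1⟩ := abs_U0e_add_le_two hn hUmc (hUmb.trans hsmall) ξ θ₀ hT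
  have hF := hF1 μ (Ioo_subset_Ico_self hμ) n (by omega) ξ hξ.ne' (by rwa [abs_of_pos hξ])
    _ _ hP0 hP1 hQ0 hQ1
  simp only [Pi.add_apply, add_sub_add_left_eq_sub] at hF
  have hW : (n:ℝ) * (|Up T 0 - Um T 0| + |Up T 1 - Um T 1|) ≤ wnorm n (fun T => Up T - Um T) :=
    natCast_mul_le_wnorm (hUpc.sub hUmc) hT
  rw [G1map_sub_weighted_eq hμ.1.le]
  calc _ ≤ μ * (L * ξ^6 * (|Up T 0 - Um T 0| + |Up T 1 - Um T 1|)) := by gcongr; exact hμ.1.le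
    _ = L * μ * ξ^6 / n * (n * (|Up T 0 - Um T 0| + |Up T 1 - Um T 1|)) := by field_simp
    _ ≤ L * μ * ξ^6 / n * wnorm n (fun T => Up T - Um T) :=
        mul_le_mul_of_nonneg_left hW
          (div_nonneg (mul_nonneg (mul_nonneg hL.le hμ.1.le) (by positivity)) n.cast_nonneg)

end
end
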